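/- arXiv:2511.23390 — 4 statements merged into one kernel-verified Lean document; each statement's English description precedes it below -/
import Mathlib

section
/- For 0 ≤ x ≤ N and 2 ≤ y ≤ N+1-x, the number of paths from (N,1) to (x,y) with steps in E = {(-1,1),(0,-1)} that stay in the region {(x',y') : y' ≥ 1, with y' = 1 only at the starting point} equals ((y-1)/L) · C(L, N-x), where L = 2N - 2x - y + 1. -/
/-!
Let `a` be the number of `(-1, 1)` steps of a path with `n` steps from `(x₀, 1)`; its endpoint is
then `(x₀ - a, 1 + 2a - n)`. Deleting the last step of an admissible path ending at height `≥ 2`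
leaves an admissible path ending at one of the two possible predecessors, so the counts satisfy
Pascal's recurrence `c (n + 1) (a + 1) = c n a + c n (a + 1)` as long as the endpoint stays at
height `≥ 2`, and vanish below. The ballot numbers `(2a - n) / n * C(n, a)` satisfy the same
recurrence, by the absorption identities for binomial coefficients.
-/

section SnocTuples

variable {α : Type*} {n : ℕ}

theorem Fin.forall_snoc_step_mem_iff [Sub α] (S : Set α) (w : Fin (n + 1) → α) (q : α) :
    (∀ j : Fin (n + 1),
        Fin.snoc (α := fun _ => α) w q j.succ - Fin.snoc (α := fun _ => α) w q j.castSucc ∈ S) ↔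
      (∀ j : Fin n, w j.succ - w j.castSucc ∈ S) ∧ q - w (Fin.last n) ∈ S := by
  simp only [Fin.forall_fin_succ' (n := n), Fin.succ_castSucc, Fin.succ_last, Nat.succ_eq_add_one,
    Fin.snoc_castSucc, Fin.snoc_last]

theorem Fin.forall_ne_zero_snoc_iff (P : α → Prop) (w : Fin (n + 1) → α) (q : α) :
    (∀ j : Fin (n + 2), j ≠ 0 → P (Fin.snoc (α := fun _ => α) w q j)) ↔
      (∀ j : Fin (n + 1), j ≠ 0 → P (w j)) ∧ P q := by
  simp only [Fin.forall_fin_succ' (n := n + 1), Fin.snoc_castSucc, Fin.snoc_last, ne_eq,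
    Fin.castSucc_eq_zero_iff, Fin.last_pos.ne', not_false_eq_true, forall_const]

end SnocTuples

theorem choose_ballot_recurrence (n a : ℕ) :
    (n + 1 : ℤ) * ((2 * a - n) * n.choose a + (2 * a + 2 - n) * n.choose (a + 1)) =
      n * (2 * a + 1 - n) * (n + 1).choose (a + 1) := by
  rcases le_or_gt a n with ha | ha
  · have h₁ := Nat.add_one_mul_choose_eq n a
    have h₂ := Nat.choose_mul_succ_eq n (a + 1)
    rw [show n + 1 - (a + 1) = n - a by omega] at h₂
    zify [ha] at h₁ h₂
    linear_combination (2 * (a : ℤ) - n) * h₁ + (2 * (a : ℤ) + 2 - n) * h₂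
  · simp [Nat.choose_eq_zero_of_lt, ha, ha.trans (Nat.lt_succ_self a)]

def ballotPaths (x₀ : ℤ) (n : ℕ) (p : ℤ × ℤ) : Set (Fin (n + 1) → ℤ × ℤ) :=
  {v | v 0 = (x₀, 1) ∧ v (Fin.last n) = p ∧
    (∀ j : Fin n, v j.succ - v j.castSucc ∈ ({(-1, 1), (0, -1)} : Set (ℤ × ℤ))) ∧
    ∀ j : Fin (n + 1), j ≠ 0 → 2 ≤ (v j).2}

section BallotPaths

variable {x₀ : ℤ} {n : ℕ} {p : ℤ × ℤ}

theorem snoc_mem_ballotPaths_iff {w : Fin (n + 1) → ℤ × ℤ} {q : ℤ × ℤ} :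
    Fin.snoc w q ∈ ballotPaths x₀ (n + 1) p ↔
      q = p ∧ 2 ≤ p.2 ∧
        (w ∈ ballotPaths x₀ n (p - (-1, 1)) ∨ w ∈ ballotPaths x₀ n (p - (0, -1))) := by
  simp only [ballotPaths, Set.mem_ofPred_eq]
  rw [Fin.forall_snoc_step_mem_iff, Fin.forall_ne_zero_snoc_iff (fun v : ℤ × ℤ => 2 ≤ v.2),
    Fin.snoc_last, ← Fin.castSucc_zero, Fin.snoc_castSucc]
  simp only [Set.mem_insert_iff, Set.mem_singleton_iff]
  constructor
  · rintro ⟨h0, rfl, ⟨hw, hlast⟩, hwpos, hq⟩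
    refine ⟨rfl, hq, ?_⟩
    rcases hlast with h | h
    · exact .inl ⟨h0, by rw [← h, sub_sub_cancel], hw, hwpos⟩
    · exact .inr ⟨h0, by rw [← h, sub_sub_cancel], hw, hwpos⟩
  · rintro ⟨rfl, hq, ⟨h0, hlast, hw, hwpos⟩ | ⟨h0, hlast, hw, hwpos⟩⟩
    · exact ⟨h0, rfl, ⟨hw, .inl (by rw [hlast, sub_sub_cancel])⟩, hwpos, hq⟩
    · exact ⟨h0, rfl, ⟨hw, .inr (by rw [hlast, sub_sub_cancel])⟩, hwpos, hq⟩

theorem ballotPaths_succ_eq_empty (hp : p.2 < 2) : ballotPaths x₀ (n + 1) p = ∅ :=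
  Set.eq_empty_of_forall_notMem fun _ ⟨_, hlast, _, hpos⟩ =>
    (hpos _ Fin.last_pos.ne').not_gt (hlast ▸ hp)

theorem ballotPaths_succ (hp : 2 ≤ p.2) :
    ballotPaths x₀ (n + 1) p = (Fin.snoc · p) ''
      (ballotPaths x₀ n (p - (-1, 1)) ∪ ballotPaths x₀ n (p - (0, -1))) := by
  ext v
  constructor
  · intro hv
    rw [← Fin.snoc_init_self v] at hv
    obtain ⟨hlast, -, hmem⟩ := snoc_mem_ballotPaths_iff.1 hv
    exact ⟨Fin.init v, hmem, by simp only [← hlast, Fin.snoc_init_self]⟩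
  · rintro ⟨w, hw, rfl⟩
    exact snoc_mem_ballotPaths_iff.2 ⟨rfl, hp, hw⟩

theorem ballotPaths_zero_subsingleton : (ballotPaths x₀ 0 p).Subsingleton :=
  fun v ⟨hv, _⟩ w ⟨hw, _⟩ => funext fun j => by rw [Fin.fin_one_eq_zero j, hv, hw]

theorem ncard_ballotPaths_zero : (ballotPaths x₀ 0 p).ncard = if p = (x₀, 1) then 1 else 0 := by
  split_ifs with hp
  · subst hp
    have hmem : (fun _ => (x₀, 1)) ∈ ballotPaths x₀ 0 (x₀, 1) :=
      ⟨rfl, rfl, Fin.elim0, fun j hj => (hj (Fin.fin_one_eq_zero j)).elim⟩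
    rw [ballotPaths_zero_subsingleton.eq_singleton_of_mem hmem, Set.ncard_singleton]
  · rw [Set.eq_empty_of_forall_notMem fun v (hv : v ∈ ballotPaths x₀ 0 p) => hp (hv.2.1 ▸ hv.1),
      Set.ncard_empty]

theorem ballotPaths_finite : ∀ {n : ℕ} {p : ℤ × ℤ}, (ballotPaths x₀ n p).Finite
  | 0, _ => ballotPaths_zero_subsingleton.finite
  | n + 1, p => by
    rcases lt_or_ge p.2 2 with hp | hp
    · simp [ballotPaths_succ_eq_empty hp]
    · rw [ballotPaths_succ hp]
      exact (ballotPaths_finite.union ballotPaths_finite).image _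

theorem ncard_ballotPaths_succ (hp : 2 ≤ p.2) :
    (ballotPaths x₀ (n + 1) p).ncard =
      (ballotPaths x₀ n (p - (-1, 1))).ncard + (ballotPaths x₀ n (p - (0, -1))).ncard := by
  have hinj : Function.Injective (Fin.snoc (α := fun _ => ℤ × ℤ) · p : _ → Fin (n + 2) → ℤ × ℤ) :=
    fun _ _ h => by simpa using congrArg Fin.init h
  rw [ballotPaths_succ hp, Set.ncard_image_of_injective _ hinj,
    Set.ncard_union_eq _ ballotPaths_finite ballotPaths_finite]
  exact Set.disjoint_left.2 fun v ⟨_, h, _⟩ ⟨_, h', _⟩ =>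
    absurd (sub_right_injective (h.symm.trans h')) (by decide)

end BallotPaths

noncomputable def ballotCount (x₀ : ℤ) (n a : ℕ) : ℕ :=
  (ballotPaths x₀ n (x₀ - a, 1 + 2 * a - n)).ncard

section BallotCount

variable {x₀ : ℤ} {n a : ℕ}

theorem ballotCount_zero : ballotCount x₀ 0 a = if a = 0 then 1 else 0 := by
  simp [ballotCount, ncard_ballotPaths_zero]

theorem ballotCount_succ_eq_zero (h : 2 * a ≤ n + 1) : ballotCount x₀ (n + 1) a = 0 := by
  rw [ballotCount, ballotPaths_succ_eq_empty (by simp only; omega), Set.ncard_empty]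

theorem ballotCount_succ_succ (h : n ≤ 2 * a) :
    ballotCount x₀ (n + 1) (a + 1) = ballotCount x₀ n a + ballotCount x₀ n (a + 1) := by
  rw [ballotCount, ncard_ballotPaths_succ (by simp only; omega)]
  congr 3 <;> ext <;> simp only [Prod.mk_sub_mk] <;> push_cast <;> ring

end BallotCount

-- The truncated `2 * a - n` vanishes exactly when the endpoint has height `≤ 1`, where (for
-- `n > 0`) there are no paths; this makes the formula hold for every `a`.
theorem ballotCount_mul (x₀ : ℤ) (n a : ℕ) :
    ballotCount x₀ n a * n = (2 * a - n) * n.choose a := by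
  induction n generalizing a with
  | zero => cases a <;> simp
  | succ n ih =>
    rcases le_or_gt (2 * a) (n + 1) with ha | ha
    · simp [ballotCount_succ_eq_zero ha, Nat.sub_eq_zero_of_le ha]
    obtain ⟨a, rfl⟩ : ∃ b, a = b + 1 := ⟨a - 1, by omega⟩
    rw [ballotCount_succ_succ (by omega)]
    rcases Nat.eq_zero_or_pos n with rfl | hn
    · rcases a with _ | a <;> simp [ballotCount_zero, Nat.choose_eq_zero_of_lt]
    refine Nat.eq_of_mul_eq_mul_left hn ?_
    have ih₁ := ih a
    have ih₂ := ih (a + 1)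
    zify [show n ≤ 2 * a by omega, show n ≤ 2 * (a + 1) by omega,
      show n + 1 ≤ 2 * (a + 1) by omega] at ih₁ ih₂ ⊢
    linear_combination ((n : ℤ) + 1) * ih₁ + ((n : ℤ) + 1) * ih₂ + choose_ballot_recurrence n a

theorem stmt5_general (N x y L : ℕ)
    (hL : (L : ℤ) = 2 * N - 2 * x - y + 1) :
    Nat.card
        {v : Fin (L + 1) → ℤ × ℤ //
          v 0 = ((N : ℤ), 1) ∧ v (Fin.last L) = ((x : ℤ), (y : ℤ)) ∧
          (∀ j : Fin L,
            v j.succ - v j.castSucc = (-1, 1) ∨ v j.succ - v j.castSucc = (0, -1)) ∧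
          (∀ j : Fin (L + 1), j ≠ 0 → 2 ≤ (v j).2)} * L
      = (y - 1) * Nat.choose L (N - x) := by
  have hend : ((x : ℤ), (y : ℤ)) = ((N : ℤ) - ↑(N - x), (1 + 2 * ↑(N - x) - L : ℤ)) := by
    ext <;> simp only <;> omega
  have key := ballotCount_mul N L (N - x)
  rw [ballotCount, ← hend, show 2 * (N - x) - L = y - 1 by omega] at key
  exact key

/-- For 0 ≤ x ≤ N and 2 ≤ y ≤ N+1-x, the number of paths from (N,1) to
(x,y) with steps in E = {(-1,1),(0,-1)} that never return to the level y' = 1 after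
the starting point equals ((y-1)/L) · C(L, N-x), where L = 2N - 2x - y + 1.
(Stated in product form: card · L = (y-1) · C(L, N-x).) -/
theorem stmt5 (N x y L : ℕ) (hx : x ≤ N) (hy2 : 2 ≤ y) (hy : (y : ℤ) ≤ N + 1 - x)
    (hL : (L : ℤ) = 2 * N - 2 * x - y + 1) :
    Nat.card
        {v : Fin (L + 1) → ℤ × ℤ //
          v 0 = ((N : ℤ), 1) ∧ v (Fin.last L) = ((x : ℤ), (y : ℤ)) ∧
          (∀ j : Fin L,
            v j.succ - v j.castSucc = (-1, 1) ∨ v j.succ - v j.castSucc = (0, -1)) ∧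
          (∀ j : Fin (L + 1), j ≠ 0 → 2 ≤ (v j).2)} * L
      = (y - 1) * Nat.choose L (N - x) :=
  stmt5_general N x y L hL
end

section
/- For the modified Maki–Thompson model on transient set S* (treating level y = 1 as absorbing after the first jump), the eigenvalue of the sub-generator with maximal real part is -N, it has geometric multiplicity one, and the corresponding last maximal class is the singleton {(N,1)}; consequently the unique QSD ν* accessible to (N,1) assigns strictly positive probability to every state of S*. -/
/-!
Order the states lexicographically by `(x, y)`: both transitions `(x, y) → (x - 1, y + 1)` and
`(x, y) → (x, y - 1)` go strictly down, so the sub-generator `Q` is triangular. Its eigenvalues are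
therefore its diagonal entries `-N y`, the largest being `-N`, attained only at `(N, 1)`, and a
triangular matrix with a simple diagonal entry `λ` has a one-dimensional `λ`-eigenspace on either
side (a kernel vector vanishing at that coordinate vanishes identically). A left `-N`-eigenvector
normalized at `(N, 1)` is then positive by induction along the order, since every other state is
entered at a positive rate from an earlier one and `-N - Q q q > 0` there.
-/

open Matrix Function Finset Polynomial OrderDual

namespace Matrix.BlockTriangular

variable {ι α : Type*} [LinearOrder α] {b : ι → α}

theorem lt_of_ne_zero {R : Type*} [Zero R] {M : Matrix ι ι R} (hM : M.BlockTriangular b)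
    (hb : Injective b) {i j : ι} (hij : i ≠ j) (h : M i j ≠ 0) : b i < b j :=
  lt_of_le_of_ne (not_lt.mp fun hlt => h (hM hlt)) (hb.ne hij)

theorem add_smul_one [DecidableEq ι] {R : Type*} [Semiring R] {M : Matrix ι ι R}
    (hM : M.BlockTriangular b) (μ : R) : (M + μ • 1).BlockTriangular b :=
  hM.add fun i j hij => by
    rw [smul_apply, one_apply_ne (ne_of_apply_ne b hij.ne'), smul_zero]

theorem det_eq_prod_diag [Fintype ι] [DecidableEq ι] {R : Type*} [CommRing R]
    {M : Matrix ι ι R} (hM : M.BlockTriangular b) (hb : Injective b) : M.det = ∏ i, M i i := by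
  let _ := LinearOrder.lift' b hb
  exact det_of_isUpperTriangular hM

theorem spectrum_eq [Fintype ι] [DecidableEq ι] {K : Type*} [Field K] {M : Matrix ι ι K}
    (hM : M.BlockTriangular b) (hb : Injective b) : spectrum K M = Set.range M.diag := by
  let _ := LinearOrder.lift' b hb
  ext μ
  simp only [mem_spectrum_iff_isRoot_charpoly, IsRoot, charpoly_of_isUpperTriangular M hM,
    eval_prod, eval_sub, eval_X, eval_C, prod_eq_zero_iff, mem_univ, sub_eq_zero, true_and,
    Set.mem_range, diag_apply]
  exact exists_congr fun _ => eq_comm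

-- At the last coordinate `i` of the support of `v`, the row of `M *ᵥ v` reduces to `M i i * v i`.
theorem eq_zero_of_mulVec_eq_zero [Fintype ι] {R : Type*} [Semiring R] [NoZeroDivisors R]
    {M : Matrix ι ι R} (hM : M.BlockTriangular b) (hb : Injective b) {s : ι}
    (hdiag : ∀ i ≠ s, M i i ≠ 0) {v : ι → R} (hv : M *ᵥ v = 0) (hs : v s = 0) : v = 0 := by
  classical
  by_contra hne
  obtain ⟨i, hi, hmax⟩ := exists_max_image {i | v i ≠ 0} b <| by
    obtain ⟨i, hi⟩ := Function.ne_iff.mp hne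
    exact ⟨i, by simpa using hi⟩
  rw [mem_filter_univ] at hi
  have hoff : ∀ j ≠ i, M i j * v j = 0 := fun j hji => by
    by_cases hM0 : M i j = 0
    · rw [hM0, zero_mul]
    · by_contra hvj
      exact (hM.lt_of_ne_zero hb hji.symm hM0).not_ge
        (hmax j (by simpa using right_ne_zero_of_mul hvj))
  have hrow : M i i * v i = 0 := by
    simpa [mulVec, dotProduct, sum_eq_single i fun j _ => hoff j] using congrFun hv i
  have his : i = s := by_contra fun h => hdiag i h (by simpa [hi] using hrow)
  exact hi (his ▸ hs)

theorem eq_zero_of_vecMul_eq_zero [Fintype ι] {R : Type*} [CommSemiring R] [NoZeroDivisors R]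
    {M : Matrix ι ι R} (hM : M.BlockTriangular b) (hb : Injective b) {s : ι}
    (hdiag : ∀ i ≠ s, M i i ≠ 0) {v : ι → R} (hv : v ᵥ* M = 0) (hs : v s = 0) : v = 0 :=
  hM.transpose.eq_zero_of_mulVec_eq_zero (toDual.injective.comp hb) hdiag
    (by rwa [mulVec_transpose]) hs

theorem finrank_ker_toLin' [Fintype ι] [DecidableEq ι] {K : Type*} [Field K] {M : Matrix ι ι K}
    (hM : M.BlockTriangular b) (hb : Injective b) {s : ι} (hs : M s s = 0)
    (hdiag : ∀ i ≠ s, M i i ≠ 0) : Module.finrank K (LinearMap.ker M.toLin') = 1 := by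
  apply le_antisymm
  · let ev : LinearMap.ker M.toLin' →ₗ[K] K := (LinearMap.proj s).comp (LinearMap.ker _).subtype
    have hev : Injective ev := by
      refine (injective_iff_map_eq_zero ev).mpr fun v hv => Subtype.ext ?_
      exact hM.eq_zero_of_mulVec_eq_zero hb hdiag (LinearMap.mem_ker.mp v.2) hv
    simpa using LinearMap.finrank_le_finrank_of_injective hev
  · obtain ⟨v, hv0, hv⟩ := exists_mulVec_eq_zero_iff.mpr <| by
      rw [hM.det_eq_prod_diag hb]
      exact prod_eq_zero (mem_univ s) hs
    refine Submodule.one_le_finrank_iff.mpr fun hbot => hv0 ?_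
    have : v ∈ LinearMap.ker M.toLin' := by simpa using hv
    simpa [hbot] using this

theorem exists_vecMul_eq_zero_apply_eq_one [Fintype ι] [DecidableEq ι] {K : Type*} [Field K]
    {M : Matrix ι ι K} (hM : M.BlockTriangular b) (hb : Injective b) {s : ι} (hs : M s s = 0)
    (hdiag : ∀ i ≠ s, M i i ≠ 0) : ∃ v, v ᵥ* M = 0 ∧ v s = 1 := by
  obtain ⟨w, hw0, hw⟩ := exists_vecMul_eq_zero_iff.mpr <| by
    rw [hM.det_eq_prod_diag hb]
    exact prod_eq_zero (mem_univ s) hs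
  have hws : w s ≠ 0 := fun h => hw0 (hM.eq_zero_of_vecMul_eq_zero hb hdiag hw h)
  exact ⟨(w s)⁻¹ • w, by rw [smul_vecMul, hw, smul_zero], by simp [hws]⟩

theorem eq_smul_of_vecMul_eq_zero [Fintype ι] {R : Type*} [CommRing R] [NoZeroDivisors R]
    {M : Matrix ι ι R} (hM : M.BlockTriangular b) (hb : Injective b) {s : ι}
    (hdiag : ∀ i ≠ s, M i i ≠ 0) {v₀ v : ι → R} (hv₀ : v₀ ᵥ* M = 0) (hv₀s : v₀ s = 1)
    (hv : v ᵥ* M = 0) : v = v s • v₀ :=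
  sub_eq_zero.mp <| hM.eq_zero_of_vecMul_eq_zero hb hdiag
    (by rw [sub_vecMul, smul_vecMul, hv, hv₀, smul_zero, sub_zero]) (by simp [hv₀s])

-- The first coordinate `j` where `ν` fails to be positive would satisfy
-- `(μ - M j j) * ν j = ∑ i ≠ j, ν i * M i j > 0`, all contributing `i` coming earlier.
theorem pos_of_vecMul_eq_smul [Fintype ι] {K : Type*} [Field K] [LinearOrder K]
    [IsStrictOrderedRing K] {M : Matrix ι ι K} (hM : M.BlockTriangular b) (hb : Injective b)
    {s : ι} {μ : K} (hdiag : ∀ i ≠ s, M i i < μ) (hoff : ∀ i j, i ≠ j → 0 ≤ M i j)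
    (hin : ∀ j ≠ s, ∃ i ≠ j, 0 < M i j) {ν : ι → K} (hν : ν ᵥ* M = μ • ν) (hνs : 0 < ν s) :
    ∀ j, 0 < ν j := by
  classical
  by_contra! hneg
  obtain ⟨j, hj, hmin⟩ := exists_min_image {j | ν j ≤ 0} b <| by
    obtain ⟨j, hj⟩ := hneg
    exact ⟨j, by simpa using hj⟩
  rw [mem_filter_univ] at hj
  have hjs : j ≠ s := fun h => (h ▸ hj).not_gt hνs
  have hpos_of_ne_zero : ∀ i ≠ j, M i j ≠ 0 → 0 < ν i := fun i hij hM0 =>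
    lt_of_not_ge fun hi => (hM.lt_of_ne_zero hb hij hM0).not_ge (hmin i (by simpa using hi))
  have hterm : ∀ i ∈ univ.erase j, 0 ≤ ν i * M i j := fun i hi => by
    have hij := ne_of_mem_erase hi
    by_cases hM0 : M i j = 0
    · simp [hM0]
    · exact mul_nonneg (hpos_of_ne_zero i hij hM0).le (hoff i j hij)
  obtain ⟨i₀, hi₀j, hi₀⟩ := hin j hjs
  have hin_pos : 0 < ∑ i ∈ univ.erase j, ν i * M i j :=
    sum_pos' hterm ⟨i₀, mem_erase.mpr ⟨hi₀j, mem_univ _⟩,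
      mul_pos (hpos_of_ne_zero i₀ hi₀j hi₀.ne') hi₀⟩
  have hcol : ν j * M j j + ∑ i ∈ univ.erase j, ν i * M i j = μ * ν j := by
    rw [add_sum_erase univ (fun i => ν i * M i j) (mem_univ j)]
    simpa [vecMul, dotProduct] using congrFun hν j
  nlinarith [hdiag j hjs]

theorem exists_pos_vecMul_eq_smul_unique [Fintype ι] [DecidableEq ι] {K : Type*} [Field K]
    [LinearOrder K] [IsStrictOrderedRing K] {M : Matrix ι ι K} (hM : M.BlockTriangular b)
    (hb : Injective b) {s : ι} (hdiag : ∀ i ≠ s, M i i < M s s)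
    (hoff : ∀ i j, i ≠ j → 0 ≤ M i j) (hin : ∀ j ≠ s, ∃ i ≠ j, 0 < M i j) :
    ∃ ν : ι → K, (∀ i, 0 < ν i) ∧ ∑ i, ν i = 1 ∧ ν ᵥ* M = M s s • ν ∧
      ∀ ν' : ι → K, ∑ i, ν' i = 1 → ν' ᵥ* M = M s s • ν' → ν' = ν := by
  set A := M + (-M s s) • 1
  have hA : A.BlockTriangular b := hM.add_smul_one _
  have hAs : A s s = 0 := by simp [A]
  have hAdiag : ∀ i ≠ s, A i i ≠ 0 := fun i hi => by
    simpa [A, ← sub_eq_add_neg, sub_eq_zero] using (hdiag i hi).ne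
  have heig : ∀ ν : ι → K, ν ᵥ* M = M s s • ν ↔ ν ᵥ* A = 0 := fun ν => by
    rw [vecMul_add, vecMul_smul, vecMul_one, neg_smul, ← sub_eq_add_neg, sub_eq_zero]
  obtain ⟨ν₀, hν₀, hν₀s⟩ := hA.exists_vecMul_eq_zero_apply_eq_one hb hAs hAdiag
  have hν₀pos : ∀ i, 0 < ν₀ i :=
    hM.pos_of_vecMul_eq_smul hb hdiag hoff hin ((heig ν₀).2 hν₀) (hν₀s ▸ one_pos)
  set c := ∑ i, ν₀ i
  have hc : 0 < c := sum_pos (fun i _ => hν₀pos i) ⟨s, mem_univ s⟩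
  refine ⟨c⁻¹ • ν₀, fun i => smul_pos (inv_pos.mpr hc) (hν₀pos i), ?_, ?_, ?_⟩
  · simp [← mul_sum, c, hc.ne']
  · rw [heig, smul_vecMul, hν₀, smul_zero]
  · intro ν' hsum hν'
    have hν'eq := hA.eq_smul_of_vecMul_eq_zero hb hAdiag hν₀ hν₀s ((heig ν').1 hν')
    have hν's : ν' s = c⁻¹ := by
      rw [hν'eq] at hsum
      simp only [Pi.smul_apply, smul_eq_mul, ← mul_sum] at hsum
      exact eq_inv_of_mul_eq_one_left hsum
    rwa [hν's] at hν'eq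

end Matrix.BlockTriangular

namespace MakiThompson

abbrev State (N : ℕ) := {p : Fin (N + 1) × Fin (N + 2) //
    (p.1.1 = N ∧ p.2.1 = 1) ∨ (2 ≤ p.2.1 ∧ p.1.1 + p.2.1 ≤ N + 1)}

def generator (N : ℕ) : Matrix (State N) (State N) ℝ := of fun p q =>
  if q = p then -((N : ℝ) * p.val.2.1)
  else if q.val.1.1 + 1 = p.val.1.1 ∧ q.val.2.1 = p.val.2.1 + 1 then
    (p.val.1.1 : ℝ) * p.val.2.1
  else if q.val.1.1 = p.val.1.1 ∧ q.val.2.1 + 1 = p.val.2.1 then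
    (p.val.2.1 : ℝ) * ((N : ℝ) - p.val.1.1)
  else 0

variable {N : ℕ}

theorem generator_apply_self (p : State N) : generator N p p = -((N : ℝ) * p.val.2.1) := by
  simp [generator]

theorem two_le_snd_of_ne {s p : State N} (hs : s.val.2.1 = 1) (hp : p ≠ s) :
    2 ≤ p.val.2.1 ∧ p.val.1.1 + p.val.2.1 ≤ N + 1 := by
  refine p.2.resolve_left fun hp' => hp (Subtype.ext (Prod.ext (Fin.ext ?_) (Fin.ext ?_)))
  · rcases s.2 with h | h <;> omega
  · omega

theorem generator_apply_self_le (p : State N) : generator N p p ≤ -N := by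
  have hy : (1 : ℝ) ≤ p.val.2.1 := by exact_mod_cast (by rcases p.2 with h | h <;> omega)
  rw [generator_apply_self]
  nlinarith [(N.cast_nonneg : (0 : ℝ) ≤ N)]

theorem generator_apply_self_lt {s p : State N} (hs : s.val.2.1 = 1) (hp : p ≠ s) :
    generator N p p < -N := by
  obtain ⟨hy, hxy⟩ := two_le_snd_of_ne hs hp
  have hy' : (2 : ℝ) ≤ p.val.2.1 := by exact_mod_cast hy
  have hN : (1 : ℝ) ≤ N := by exact_mod_cast (by omega : 1 ≤ N)
  rw [generator_apply_self]
  nlinarith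

theorem generator_nonneg {p q : State N} (hpq : p ≠ q) : 0 ≤ generator N p q := by
  have hx : (p.val.1.1 : ℝ) ≤ N := by exact_mod_cast Nat.lt_succ_iff.mp p.val.1.isLt
  simp only [generator, of_apply, if_neg (Ne.symm hpq)]
  split_ifs
  · positivity
  · exact mul_nonneg (Nat.cast_nonneg _) (sub_nonneg.mpr hx)
  · exact le_rfl

theorem generator_blockTriangular :
    (generator N).BlockTriangular (toDual ∘ toLex ∘ Subtype.val) := by
  intro p q hpq
  simp only [Function.comp_apply, toDual_lt_toDual, Prod.Lex.toLex_lt_toLex, Fin.lt_def,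
    Fin.ext_iff] at hpq
  have hqp : q ≠ p := fun h => by subst h; omega
  simp only [generator, of_apply, if_neg hqp]
  rw [if_neg (by omega), if_neg (by omega)]

theorem generator_apply_of_up {p q : State N} (hx : q.val.1.1 + 1 = p.val.1.1)
    (hy : q.val.2.1 = p.val.2.1 + 1) : generator N p q = (p.val.1.1 : ℝ) * p.val.2.1 := by
  rw [generator, of_apply, if_neg fun h => by subst h; omega, if_pos ⟨hx, hy⟩]

theorem generator_apply_of_down {p q : State N} (hx : q.val.1.1 = p.val.1.1)
    (hy : q.val.2.1 + 1 = p.val.2.1) :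
    generator N p q = (p.val.2.1 : ℝ) * ((N : ℝ) - p.val.1.1) := by
  rw [generator, of_apply, if_neg fun h => by subst h; omega, if_neg (by omega), if_pos ⟨hx, hy⟩]

theorem exists_generator_pos {q : State N}
    (hq : 2 ≤ q.val.2.1 ∧ q.val.1.1 + q.val.2.1 ≤ N + 1) :
    ∃ p ≠ q, 0 < generator N p q := by
  obtain ⟨⟨⟨x, hx⟩, ⟨y, hy⟩⟩, hxy⟩ := q
  change 2 ≤ y ∧ x + y ≤ N + 1 at hq
  by_cases hdiag : x + y ≤ N
  · let p : State N := ⟨(⟨x, hx⟩, ⟨y + 1, by omega⟩),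
      Or.inr (show 2 ≤ y + 1 ∧ x + (y + 1) ≤ N + 1 by omega)⟩
    refine ⟨p, by simp [p], ?_⟩
    rw [generator_apply_of_down (p := p) (q := ⟨_, hxy⟩) rfl rfl]
    have hxN : (x : ℝ) < N := by exact_mod_cast (by omega : x < N)
    exact mul_pos (by positivity) (sub_pos.mpr hxN)
  · let p : State N := ⟨(⟨x + 1, by omega⟩, ⟨y - 1, by omega⟩),
      show (x + 1 = N ∧ y - 1 = 1) ∨ (2 ≤ y - 1 ∧ x + 1 + (y - 1) ≤ N + 1) by omega⟩
    refine ⟨p, by simp [p], ?_⟩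
    rw [generator_apply_of_up (p := p) (q := ⟨_, hxy⟩) rfl (show y = y - 1 + 1 by omega)]
    have hy1 : (0 : ℝ) < (y - 1 : ℕ) := by exact_mod_cast (by omega : 0 < y - 1)
    exact mul_pos (by positivity) hy1

end MakiThompson

open MakiThompson in
theorem stmt14_general (N : ℕ)
    (Q : Matrix {p : Fin (N + 1) × Fin (N + 2) //
          (p.1.1 = N ∧ p.2.1 = 1) ∨ (2 ≤ p.2.1 ∧ p.1.1 + p.2.1 ≤ N + 1)}
        {p : Fin (N + 1) × Fin (N + 2) //
          (p.1.1 = N ∧ p.2.1 = 1) ∨ (2 ≤ p.2.1 ∧ p.1.1 + p.2.1 ≤ N + 1)} ℝ)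
    (hQ : ∀ p q, Q p q =
      if q = p then -((N : ℝ) * p.val.2.1)
      else if q.val.1.1 + 1 = p.val.1.1 ∧ q.val.2.1 = p.val.2.1 + 1 then
        (p.val.1.1 : ℝ) * p.val.2.1
      else if q.val.1.1 = p.val.1.1 ∧ q.val.2.1 + 1 = p.val.2.1 then
        (p.val.2.1 : ℝ) * ((N : ℝ) - p.val.1.1)
      else 0)
    (start : {p : Fin (N + 1) × Fin (N + 2) //
          (p.1.1 = N ∧ p.2.1 = 1) ∨ (2 ≤ p.2.1 ∧ p.1.1 + p.2.1 ≤ N + 1)})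
    (hstart : start.val.1.1 = N ∧ start.val.2.1 = 1) :
    -- -N is an eigenvalue and every (complex) eigenvalue has real part ≤ -N
    ((-(N : ℂ)) ∈ spectrum ℂ (Q.map (algebraMap ℝ ℂ))) ∧
    (∀ μ ∈ spectrum ℂ (Q.map (algebraMap ℝ ℂ)), μ.re ≤ -(N : ℝ)) ∧
    -- geometric multiplicity one
    Module.finrank ℝ
      ↥(LinearMap.ker (Matrix.toLin' (Q + (N : ℝ) • (1 : Matrix _ _ ℝ)))) = 1 ∧
    -- the last maximal class is the singleton {(N,1)}: the only state with rate N
    (∀ p, Q p p = -(N : ℝ) ↔ p = start) ∧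
    -- unique QSD, strictly positive on all of S*
    (∃ ν, (∀ p, 0 < ν p) ∧ (∑ p, ν p = 1) ∧ ν ᵥ* Q = (-(N : ℝ)) • ν ∧
      ∀ ν', (∀ p, 0 ≤ ν' p) → (∑ p, ν' p = 1) → ν' ᵥ* Q = (-(N : ℝ)) • ν' →
        ν' = ν) := by
  obtain rfl : Q = generator N := Matrix.ext hQ
  have hb : Injective (toDual ∘ toLex ∘ Subtype.val : State N → _) :=
    toDual.injective.comp (toLex.injective.comp Subtype.val_injective)
  have hM := generator_blockTriangular (N := N)
  have hs : generator N start start = -N := by simp [generator_apply_self, hstart.2]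
  have hlt : ∀ p ≠ start, generator N p p < generator N start start := fun p hp =>
    hs ▸ generator_apply_self_lt hstart.2 hp
  have hspec := (hM.map (algebraMap ℝ ℂ)).spectrum_eq hb
  refine ⟨?_, ?_, ?_, fun p => ⟨fun h => ?_, fun h => h ▸ hs⟩, ?_⟩
  · rw [hspec]
    exact ⟨start, by simp [hs]⟩
  · rw [hspec]
    rintro _ ⟨p, rfl⟩
    simpa using generator_apply_self_le p
  · refine (hM.add_smul_one _).finrank_ker_toLin' hb (s := start) (by simp [hs]) fun p hp => ?_
    simpa [add_eq_zero_iff_eq_neg, ← hs] using (hlt p hp).ne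
  · by_contra hp
    exact (hlt p hp).ne (h.trans hs.symm)
  · obtain ⟨ν, hpos, hsum, heig, huniq⟩ := hM.exists_pos_vecMul_eq_smul_unique hb hlt
      (fun _ _ => generator_nonneg) fun q hq => exists_generator_pos (two_le_snd_of_ne hstart.2 hq)
    rw [hs] at heig huniq
    exact ⟨ν, hpos, hsum, heig, fun ν' _ => huniq ν'⟩

/-- For the modified Maki–Thompson model on the transient set
S* = {(N,1)} ∪ {(x,y) : 0 ≤ x ≤ N, 2 ≤ y ≤ N+1-x} (level y = 1 absorbing after the
first jump), with sub-generator Q (rates: (x,y)→(x-1,y+1) at xy, (x,y)→(x,y-1) at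
y(N-x), total rate Ny): the eigenvalue of Q with maximal real part is -N, it has
geometric multiplicity one, the last maximal class is the singleton {(N,1)} (the only
state with total rate N), and consequently there is a unique QSD ν* (normalized
nonnegative left eigenvector for -N), which is strictly positive on all of S*. -/
theorem stmt14 (N : ℕ) (hN : 1 ≤ N)
    (Q : Matrix {p : Fin (N + 1) × Fin (N + 2) //
          (p.1.1 = N ∧ p.2.1 = 1) ∨ (2 ≤ p.2.1 ∧ p.1.1 + p.2.1 ≤ N + 1)}
        {p : Fin (N + 1) × Fin (N + 2) //
          (p.1.1 = N ∧ p.2.1 = 1) ∨ (2 ≤ p.2.1 ∧ p.1.1 + p.2.1 ≤ N + 1)} ℝ)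
    (hQ : ∀ p q, Q p q =
      if q = p then -((N : ℝ) * p.val.2.1)
      else if q.val.1.1 + 1 = p.val.1.1 ∧ q.val.2.1 = p.val.2.1 + 1 then
        (p.val.1.1 : ℝ) * p.val.2.1
      else if q.val.1.1 = p.val.1.1 ∧ q.val.2.1 + 1 = p.val.2.1 then
        (p.val.2.1 : ℝ) * ((N : ℝ) - p.val.1.1)
      else 0)
    (start : {p : Fin (N + 1) × Fin (N + 2) //
          (p.1.1 = N ∧ p.2.1 = 1) ∨ (2 ≤ p.2.1 ∧ p.1.1 + p.2.1 ≤ N + 1)})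
    (hstart : start.val.1.1 = N ∧ start.val.2.1 = 1) :
    -- -N is an eigenvalue and every (complex) eigenvalue has real part ≤ -N
    ((-(N : ℂ)) ∈ spectrum ℂ (Q.map (algebraMap ℝ ℂ))) ∧
    (∀ μ ∈ spectrum ℂ (Q.map (algebraMap ℝ ℂ)), μ.re ≤ -(N : ℝ)) ∧
    -- geometric multiplicity one
    Module.finrank ℝ
      ↥(LinearMap.ker (Matrix.toLin' (Q + (N : ℝ) • (1 : Matrix _ _ ℝ)))) = 1 ∧
    -- the last maximal class is the singleton {(N,1)}: the only state with rate N
    (∀ p, Q p p = -(N : ℝ) ↔ p = start) ∧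
    -- unique QSD, strictly positive on all of S*
    (∃ ν, (∀ p, 0 < ν p) ∧ (∑ p, ν p = 1) ∧ ν ᵥ* Q = (-(N : ℝ)) • ν ∧
      ∀ ν', (∀ p, 0 ≤ ν' p) → (∑ p, ν' p = 1) → ν' ᵥ* Q = (-(N : ℝ)) • ν' →
        ν' = ν) :=
  stmt14_general N Q hQ start hstart
end

section
/- For the SIR epidemic model with infection rate β and removal rate μ, conditioned not to return to level I = 1 after the first jump from (N,1): a non-trivial QSD (assigning positive mass to all transient states) exists if and only if μ > βN. Equivalently, the singleton class {(N,1)} with rate βN + μ is the last maximal class if and only if βN + μ < 2μ, since the minimal rate among states with I ≥ 2 is 2μ (attained at (0,2)). -/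
/-!
Order the states by `2s + i`, the number of jumps still to come. Every transition lowers it by
one, so the generator is triangular, with the total rates `-i(βs + μ)` on its diagonal, and no
transition enters `(N,1)`. The column of `(N,1)` therefore forces the eigenvalue of a positive
left eigenvector to be `-(βN + μ)`, and the column of `(0,2)`, which is entered at positive rate,
then forces `βN + μ < 2μ`. Conversely, if `βN + μ < 2μ ≤ i(βs + μ)` whenever `i ≥ 2`, the
eigenvector can be solved for column by column in decreasing order, starting from `1` at `(N,1)`;
all its entries are positive because every other state is entered at positive rate from a state
that comes earlier.
-/

open Matrix Finset

namespace Matrix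

variable {ι : Type*} [Fintype ι]

theorem diag_eq_neg_of_vecMul_eq_smul {A : Matrix ι ι ℝ} {ν : ι → ℝ} {lam : ℝ}
    (h : ν ᵥ* A = (-lam) • ν) {t : ι} (hνt : ν t ≠ 0) (ht : ∀ p ≠ t, A p t = 0) :
    A t t = -lam := by
  have hcol := congrFun h t
  rw [vecMul, dotProduct, sum_eq_single t (fun p _ hp => by rw [ht p hp, mul_zero])
    (fun h => absurd (mem_univ t) h), Pi.smul_apply, smul_eq_mul] at hcol
  exact mul_left_cancel₀ hνt (hcol.trans (mul_comm _ _))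

variable [DecidableEq ι]

theorem diag_lt_neg_of_vecMul_eq_smul {A : Matrix ι ι ℝ} {ν : ι → ℝ} {lam : ℝ}
    (hν : ∀ p, 0 < ν p) (hA : ∀ p q, p ≠ q → 0 ≤ A p q) (h : ν ᵥ* A = (-lam) • ν)
    {p q : ι} (hpq : p ≠ q) (hApq : 0 < A p q) : A q q < -lam := by
  have hcol : ν q * A q q + ∑ p ∈ univ.erase q, ν p * A p q = -lam * ν q := by
    rw [add_sum_erase _ (fun p => ν p * A p q) (mem_univ q)]
    exact congrFun h q
  have hinflow : ν p * A p q ≤ ∑ p ∈ univ.erase q, ν p * A p q :=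
    single_le_sum (fun p' hp' => mul_nonneg (hν p').le (hA p' q (ne_of_mem_erase hp')))
      (mem_erase.mpr ⟨hpq, mem_univ p⟩)
  have : ν q * (A q q + lam) < 0 := by nlinarith [mul_pos (hν p) hApq]
  linarith [neg_of_mul_neg_right this (hν q).le]

section Ranked

variable (A : Matrix ι ι ℝ) (r : ι → ℕ) (lam : ℝ) (t : ι)

-- solves column `q` of `ν ᵥ* A = -lam • ν` for `ν q`, given `ν` on the states of higher rank
noncomputable def rankedEigenvector (q : ι) : ℝ :=
  if q = t then 1
  else (∑ p ∈ (univ.filter fun p => r q < r p).attach, rankedEigenvector p * A p q) /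
    (-lam - A q q)
termination_by univ.sup r - r q
decreasing_by
  have := (mem_filter.mp p.2).2
  have := le_sup (f := r) (mem_univ p.1)
  omega

variable {A r lam t}

theorem rankedEigenvector_of_ne {q : ι} (hq : q ≠ t) :
    rankedEigenvector A r lam t q =
      (∑ p ∈ univ.filter (fun p => r q < r p), rankedEigenvector A r lam t p * A p q) /
        (-lam - A q q) := by
  rw [rankedEigenvector, if_neg hq,
    sum_attach _ (fun p => rankedEigenvector A r lam t p * A p q)]

theorem vecMul_apply_eq_of_rank (hA_rank : ∀ p q, p ≠ q → r p ≤ r q → A p q = 0)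
    (ν : ι → ℝ) (q : ι) :
    (ν ᵥ* A) q = ν q * A q q + ∑ p ∈ univ.filter (fun p => r q < r p), ν p * A p q := by
  rw [vecMul, dotProduct, ← add_sum_erase _ _ (mem_univ q)]
  congr 1
  refine (sum_subset (fun p hp => mem_erase.mpr ⟨?_, mem_univ p⟩) (fun p hp hpq => ?_)).symm
  · rintro rfl
    exact lt_irrefl _ (mem_filter.mp hp).2
  · rw [hA_rank p q (ne_of_mem_erase hp) (not_lt.mp fun h => hpq (by simp [h])), mul_zero]

theorem rankedEigenvector_vecMul (hA_rank : ∀ p q, p ≠ q → r p ≤ r q → A p q = 0)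
    (ht_max : ∀ p, r p ≤ r t) (ht : A t t = -lam)
    (hgap : ∀ q ≠ t, A q q ≠ -lam) :
    rankedEigenvector A r lam t ᵥ* A = (-lam) • rankedEigenvector A r lam t := by
  funext q
  rw [vecMul_apply_eq_of_rank hA_rank, Pi.smul_apply, smul_eq_mul]
  by_cases hq : q = t
  · subst hq
    rw [filter_false_of_mem (fun p _ => not_lt.mpr (ht_max p)), sum_empty, ht]
    ring
  · have hden : -lam - A q q ≠ 0 := sub_ne_zero.mpr (hgap q hq).symm
    rw [rankedEigenvector_of_ne hq]
    field_simp
    ring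

theorem rankedEigenvector_pos (hA_rank : ∀ p q, p ≠ q → r p ≤ r q → A p q = 0)
    (hA_nonneg : ∀ p q, p ≠ q → 0 ≤ A p q)
    (hgap : ∀ q ≠ t, A q q < -lam) (hpred : ∀ q ≠ t, ∃ p ≠ q, 0 < A p q) (q : ι) :
    0 < rankedEigenvector A r lam t q := by
  induction q using rankedEigenvector.induct r t with
  | case1 => rw [rankedEigenvector, if_pos rfl]; exact one_pos
  | case2 q hq ih =>
    rw [rankedEigenvector_of_ne hq]
    refine div_pos ?_ (by linarith [hgap q hq])
    obtain ⟨p, hpq, hApq⟩ := hpred q hq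
    have hp : p ∈ univ.filter (fun p => r q < r p) :=
      mem_filter.mpr ⟨mem_univ p, not_le.mp fun h => hApq.ne' (hA_rank p q hpq h)⟩
    refine sum_pos' (fun p' hp' => mul_nonneg (ih ⟨p', hp'⟩).le (hA_nonneg p' q ?_))
      ⟨p, hp, mul_pos (ih ⟨p, hp⟩) hApq⟩
    rintro rfl
    exact lt_irrefl _ (mem_filter.mp hp').2

theorem exists_pos_sum_eq_one_vecMul_eq_smul_of_rank
    (hA_rank : ∀ p q, p ≠ q → r p ≤ r q → A p q = 0) (hA_nonneg : ∀ p q, p ≠ q → 0 ≤ A p q)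
    (ht_max : ∀ p, r p ≤ r t) (ht : A t t = -lam) (hgap : ∀ q ≠ t, A q q < -lam)
    (hpred : ∀ q ≠ t, ∃ p ≠ q, 0 < A p q) :
    ∃ ν : ι → ℝ, (∀ p, 0 < ν p) ∧ ∑ p, ν p = 1 ∧ ν ᵥ* A = (-lam) • ν := by
  set ν := rankedEigenvector A r lam t
  have hν := rankedEigenvector_pos hA_rank hA_nonneg hgap hpred
  have hsum : 0 < ∑ p, ν p := sum_pos (fun p _ => hν p) ⟨t, mem_univ t⟩
  refine ⟨(∑ p, ν p)⁻¹ • ν, fun p => mul_pos (inv_pos.mpr hsum) (hν p), ?_, ?_⟩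
  · simp only [Pi.smul_apply, smul_eq_mul, ← mul_sum, inv_mul_cancel₀ hsum.ne']
  · rw [smul_vecMul, rankedEigenvector_vecMul hA_rank ht_max ht fun q hq => (hgap q hq).ne,
      smul_comm]

end Ranked

end Matrix

abbrev SIRState (N : ℕ) := {p : Fin (N + 1) × Fin (N + 2) //
    (p.1.1 = N ∧ p.2.1 = 1) ∨ (2 ≤ p.2.1 ∧ p.1.1 + p.2.1 ≤ N + 1)}

namespace SIRState

variable {N : ℕ}

def S (p : SIRState N) : ℕ := p.val.1.1

def I (p : SIRState N) : ℕ := p.val.2.1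

theorem mem (p : SIRState N) : (p.S = N ∧ p.I = 1) ∨ (2 ≤ p.I ∧ p.S + p.I ≤ N + 1) := p.2

def mk' (s i : ℕ) (h : (s = N ∧ i = 1) ∨ (2 ≤ i ∧ s + i ≤ N + 1)) : SIRState N :=
  ⟨(⟨s, by omega⟩, ⟨i, by omega⟩), h⟩

@[simp] theorem S_mk' {s i : ℕ} (h : (s = N ∧ i = 1) ∨ (2 ≤ i ∧ s + i ≤ N + 1)) :
    (mk' s i h).S = s := rfl

@[simp] theorem I_mk' {s i : ℕ} (h : (s = N ∧ i = 1) ∨ (2 ≤ i ∧ s + i ≤ N + 1)) :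
    (mk' s i h).I = i := rfl

theorem ext' {p q : SIRState N} (hS : p.S = q.S) (hI : p.I = q.I) : p = q :=
  Subtype.ext (Prod.ext (Fin.ext hS) (Fin.ext hI))

def top : SIRState N := mk' N 1 (Or.inl ⟨rfl, rfl⟩)

theorem S_le (p : SIRState N) : p.S ≤ N := Nat.lt_succ_iff.mp p.val.1.isLt

theorem two_le_I_of_ne_top {p : SIRState N} (hp : p ≠ top) : 2 ≤ p.I := by
  rcases p.mem with h | h
  · exact absurd (ext' h.1 h.2) hp
  · exact h.1

-- each susceptible is yet to be infected and removed, each infective to be removed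
def remainingJumps (p : SIRState N) : ℕ := 2 * p.S + p.I

theorem remainingJumps_le_top (p : SIRState N) :
    p.remainingJumps ≤ (top : SIRState N).remainingJumps := by
  have := p.mem
  have := p.S_le
  simp only [remainingJumps, top, S_mk', I_mk']
  omega

end SIRState

open SIRState

def sirGenerator (N : ℕ) (β μ : ℝ) : Matrix (SIRState N) (SIRState N) ℝ := fun p q =>
  if q = p then -((p.I : ℝ) * (β * p.S + μ))
  else if q.S + 1 = p.S ∧ q.I = p.I + 1 then β * p.S * p.I
  else if q.S = p.S ∧ q.I + 1 = p.I then μ * p.I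
  else 0

section SIRGenerator

variable {N : ℕ} {β μ : ℝ}

theorem sirGenerator_diag (p : SIRState N) :
    sirGenerator N β μ p p = -((p.I : ℝ) * (β * p.S + μ)) :=
  if_pos rfl

theorem sirGenerator_nonneg (hβ : 0 ≤ β) (hμ : 0 ≤ μ) (p q : SIRState N) (hpq : p ≠ q) :
    0 ≤ sirGenerator N β μ p q := by
  unfold sirGenerator
  split_ifs <;> first | positivity | exact absurd ‹q = p›.symm hpq

theorem sirGenerator_eq_zero_of_remainingJumps_le (p q : SIRState N) (hpq : p ≠ q)
    (h : p.remainingJumps ≤ q.remainingJumps) : sirGenerator N β μ p q = 0 := by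
  unfold sirGenerator remainingJumps at *
  rw [if_neg (Ne.symm hpq), if_neg (by omega), if_neg (by omega)]

theorem sirGenerator_diag_lt (hβ : 0 ≤ β) (h : β * N < μ) {q : SIRState N} (hq : q ≠ top) :
    sirGenerator N β μ q q < -(β * N + μ) := by
  have hI : (2 : ℝ) ≤ q.I := by exact_mod_cast two_le_I_of_ne_top hq
  have hμ : 0 ≤ μ := (mul_nonneg hβ (Nat.cast_nonneg N)).trans h.le
  rw [sirGenerator_diag]
  nlinarith [mul_le_mul_of_nonneg_right hI (by positivity : (0 : ℝ) ≤ β * q.S + μ)]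

theorem exists_sirGenerator_pos (hβ : 0 < β) (hμ : 0 < μ) {q : SIRState N} (hq : q ≠ top) :
    ∃ p ≠ q, 0 < sirGenerator N β μ p q := by
  have hI := two_le_I_of_ne_top hq
  have hq' := q.mem
  by_cases hroom : q.S + q.I ≤ N
  · refine ⟨mk' q.S (q.I + 1) (Or.inr ⟨by omega, by omega⟩), fun h => ?_, ?_⟩
    · have := congrArg I h; simp at this
    · unfold sirGenerator
      rw [if_neg (fun h => by have := congrArg I h; simp at this), if_neg (by simp),
        if_pos (by simp)]
      simp only [I_mk']
      positivity
  · have hS := q.S_le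
    refine ⟨mk' (q.S + 1) (q.I - 1) (by omega), fun h => ?_, ?_⟩
    · have := congrArg S h; simp at this
    · unfold sirGenerator
      rw [if_neg (fun h => by have := congrArg S h; simp at this), if_pos (by simp; omega)]
      simp only [S_mk', I_mk']
      have : (0 : ℝ) < (q.I - 1 : ℕ) := by exact_mod_cast (by omega : 0 < q.I - 1)
      positivity

end SIRGenerator

/-- For the SIR epidemic model with infection rate β and removal rate μ,
conditioned not to return to level I = 1 after the first jump from (N,1), on the
transient set Ŝ = {(N,1)} ∪ {(s,i) : 2 ≤ i ≤ N+1-s} with sub-generator Q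
(total rate i(βs+μ) at (s,i)): a non-trivial QSD assigning strictly positive mass to
all transient states exists if and only if μ > βN; equivalently, (N,1) (with rate
βN + μ) is the last maximal class iff βN + μ < 2μ, the minimal rate among states
with i ≥ 2 (attained at (0,2)). -/
theorem stmt17 (N : ℕ) (hN : 1 ≤ N) (β μ : ℝ) (hβ : 0 < β) (hμ : 0 < μ)
    (Q : Matrix {p : Fin (N + 1) × Fin (N + 2) //
          (p.1.1 = N ∧ p.2.1 = 1) ∨ (2 ≤ p.2.1 ∧ p.1.1 + p.2.1 ≤ N + 1)}
        {p : Fin (N + 1) × Fin (N + 2) //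
          (p.1.1 = N ∧ p.2.1 = 1) ∨ (2 ≤ p.2.1 ∧ p.1.1 + p.2.1 ≤ N + 1)} ℝ)
    (hQ : ∀ p q, Q p q =
      if q = p then -((p.val.2.1 : ℝ) * (β * p.val.1.1 + μ))
      else if q.val.1.1 + 1 = p.val.1.1 ∧ q.val.2.1 = p.val.2.1 + 1 then
        β * p.val.1.1 * p.val.2.1
      else if q.val.1.1 = p.val.1.1 ∧ q.val.2.1 + 1 = p.val.2.1 then
        μ * p.val.2.1
      else 0) :
    ((∃ ν : _ → ℝ, (∀ p, 0 ≤ ν p) ∧ (∑ p, ν p = 1) ∧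
        (∃ lam : ℝ, ν ᵥ* Q = (-lam) • ν) ∧ (∀ p, 0 < ν p))
      ↔ μ > β * N) ∧
    ((β * N + μ < 2 * μ) ↔ μ > β * N) := by
  obtain rfl : Q = sirGenerator N β μ := Matrix.ext hQ
  have hnonneg := sirGenerator_nonneg (N := N) hβ.le hμ.le
  refine ⟨⟨?_, fun h => ?_⟩, by constructor <;> intro <;> linarith⟩
  · rintro ⟨ν, -, -, ⟨lam, hν⟩, hpos⟩
    have hlam := diag_eq_neg_of_vecMul_eq_smul hν (hpos top).ne' fun p hp =>
      sirGenerator_eq_zero_of_remainingJumps_le p top hp (remainingJumps_le_top p)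
    let q : SIRState N := mk' 0 2 (Or.inr ⟨le_rfl, by omega⟩)
    have hq : q ≠ top := fun h => by have := congrArg I h; simp [q, top] at this
    obtain ⟨p, hpq, hp⟩ := exists_sirGenerator_pos hβ hμ hq
    have hlt := diag_lt_neg_of_vecMul_eq_smul hpos hnonneg hν hpq hp
    simp only [sirGenerator_diag, q, top, S_mk', I_mk'] at hlam hlt
    push_cast at hlam hlt
    linarith
  · obtain ⟨ν, hpos, hsum, hν⟩ := exists_pos_sum_eq_one_vecMul_eq_smul_of_rank
      (t := top) sirGenerator_eq_zero_of_remainingJumps_le hnonneg remainingJumps_le_top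
      (by simp [sirGenerator_diag, top]) (fun q hq => sirGenerator_diag_lt hβ.le h hq)
      (fun q hq => exists_sirGenerator_pos hβ hμ hq)
    exact ⟨ν, fun p => (hpos p).le, hsum, ⟨_, hν⟩, hpos⟩
end

section
/- Let Q be the sub-generator of a strictly evolutionary finite chain (singleton transient classes, DAG transition structure) with exit rates q_i, and suppose -λ = -min_i q_i is an eigenvalue of geometric multiplicity one whose associated last minimal class is {i₀}. Then any left eigenvector ν of Q with eigenvalue -λ, normalized to be a probability vector, satisfies ν_j > 0 if and only if j is accessible from i₀. -/
/-!
A nonnegative left eigenvector `ν` for `-λ` satisfies, at every state `k`, the balance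
`∑_{i ≠ k} ν i Q i k = (q k - λ) ν k`. Hence positivity of `ν` spreads along transitions, and every
state reached by a transition out of the support has rate strictly above `λ`. Conversely a state of
the support with no predecessor in the support has rate `λ`; such a state must be `i₀`, since
otherwise it would reach `i₀` and force `q i₀ > λ`. As the transition graph is acyclic, every state
of the support is reached from one without predecessors in the support, i.e. from `i₀`.
-/

open Matrix Relation Finset

section

variable {ι : Type*} {Q : Matrix ι ι ℝ} {q : ι → ℝ} {lam : ℝ} {ν : ι → ℝ}

def Transition (Q : Matrix ι ι ℝ) (a b : ι) : Prop := a ≠ b ∧ Q a b ≠ 0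

theorem transGen_transition_irrefl
    (hDAG : ∀ i j, ReflTransGen (Transition Q) i j → ReflTransGen (Transition Q) j i → i = j)
    (a : ι) : ¬ TransGen (Transition Q) a a := by
  rw [TransGen.head'_iff]
  rintro ⟨b, hab, hba⟩
  exact hab.1 (hDAG a b (.single hab) hba)

theorem wellFounded_transGen_transition [Finite ι]
    (hDAG : ∀ i j, ReflTransGen (Transition Q) i j → ReflTransGen (Transition Q) j i → i = j) :
    WellFounded (TransGen (Transition Q)) :=
  haveI : Std.Irrefl (TransGen (Transition Q)) := ⟨transGen_transition_irrefl hDAG⟩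
  Finite.wellFounded_of_trans_of_irrefl _

variable [Fintype ι]

theorem sum_erase_mul_eq_of_vecMul_eq_smul [DecidableEq ι] (hdiag : ∀ i, Q i i = -q i)
    (hν : ν ᵥ* Q = (-lam) • ν) (k : ι) :
    ∑ i ∈ univ.erase k, ν i * Q i k = (q k - lam) * ν k := by
  have hk : ∑ i, ν i * Q i k = -lam * ν k := by
    simpa [vecMul, dotProduct] using congrFun hν k
  rw [← add_sum_erase _ _ (mem_univ k), hdiag] at hk
  linear_combination hk

theorem pos_and_lt_of_transition (hdiag : ∀ i, Q i i = -q i) (hoff : ∀ i j, i ≠ j → 0 ≤ Q i j)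
    (hν : ν ᵥ* Q = (-lam) • ν) (hnn : ∀ i, 0 ≤ ν i) {i k : ι} (hi : 0 < ν i)
    (hik : Transition Q i k) : 0 < ν k ∧ lam < q k := by
  classical
  have hQ : 0 < Q i k := (hoff i k hik.1).lt_of_ne' hik.2
  have hin : 0 < (q k - lam) * ν k := by
    rw [← sum_erase_mul_eq_of_vecMul_eq_smul hdiag hν]
    exact sum_pos' (fun x hx => mul_nonneg (hnn x) (hoff x k (ne_of_mem_erase hx)))
      ⟨i, mem_erase.mpr ⟨hik.1, mem_univ i⟩, mul_pos hi hQ⟩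
  have hk : 0 < ν k := (hnn k).lt_of_ne fun h => by simp [← h] at hin
  exact ⟨hk, sub_pos.mp (pos_of_mul_pos_left hin hk.le)⟩

theorem pos_of_reflTransGen (hdiag : ∀ i, Q i i = -q i) (hoff : ∀ i j, i ≠ j → 0 ≤ Q i j)
    (hν : ν ᵥ* Q = (-lam) • ν) (hnn : ∀ i, 0 ≤ ν i) {a b : ι} (ha : 0 < ν a)
    (hab : ReflTransGen (Transition Q) a b) : 0 < ν b := by
  induction hab with
  | refl => exact ha
  | tail _ hbc ih => exact (pos_and_lt_of_transition hdiag hoff hν hnn ih hbc).1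

theorem lt_of_transGen (hdiag : ∀ i, Q i i = -q i) (hoff : ∀ i j, i ≠ j → 0 ≤ Q i j)
    (hν : ν ᵥ* Q = (-lam) • ν) (hnn : ∀ i, 0 ≤ ν i) {a b : ι} (ha : 0 < ν a)
    (hab : TransGen (Transition Q) a b) : lam < q b := by
  obtain ⟨c, hac, hcb⟩ := TransGen.tail'_iff.mp hab
  have hc : 0 < ν c := pos_of_reflTransGen hdiag hoff hν hnn ha hac
  exact (pos_and_lt_of_transition hdiag hoff hν hnn hc hcb).2

theorem eq_of_forall_transition_eq_zero (hdiag : ∀ i, Q i i = -q i) (hν : ν ᵥ* Q = (-lam) • ν)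
    {m : ι} (hm : 0 < ν m) (hpred : ∀ i, Transition Q i m → ν i = 0) : q m = lam := by
  classical
  have hzero : ∑ i ∈ univ.erase m, ν i * Q i m = 0 :=
    sum_eq_zero fun i hi => by
      by_cases hQ : Q i m = 0
      · simp [hQ]
      · simp [hpred i ⟨ne_of_mem_erase hi, hQ⟩]
  rw [sum_erase_mul_eq_of_vecMul_eq_smul hdiag hν] at hzero
  linarith [(mul_eq_zero.mp hzero).resolve_right hm.ne']

theorem eq_of_pos_of_eq_of_reflTransGen (hdiag : ∀ i, Q i i = -q i)
    (hoff : ∀ i j, i ≠ j → 0 ≤ Q i j) (hν : ν ᵥ* Q = (-lam) • ν) (hnn : ∀ i, 0 ≤ ν i)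
    {i₀ : ι} (hi₀ : q i₀ = lam)
    (hlast : ∀ i, q i = lam → i ≠ i₀ → ReflTransGen (Transition Q) i i₀)
    {m : ι} (hm : 0 < ν m) (hqm : q m = lam) : m = i₀ := by
  by_contra hne
  have hmi₀ : TransGen (Transition Q) m i₀ :=
    (reflTransGen_iff_eq_or_transGen.mp (hlast m hqm hne)).resolve_left (Ne.symm hne)
  exact (lt_of_transGen hdiag hoff hν hnn hm hmi₀).ne' hi₀

theorem exists_eq_and_reflTransGen_of_pos
    (hDAG : ∀ i j, ReflTransGen (Transition Q) i j → ReflTransGen (Transition Q) j i → i = j)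
    (hdiag : ∀ i, Q i i = -q i) (hν : ν ᵥ* Q = (-lam) • ν) (hnn : ∀ i, 0 ≤ ν i)
    {j : ι} (hj : 0 < ν j) : ∃ m, 0 < ν m ∧ q m = lam ∧ ReflTransGen (Transition Q) m j := by
  induction j using (wellFounded_transGen_transition hDAG).induction with
  | _ j ih =>
  by_cases hpred : ∃ i, Transition Q i j ∧ 0 < ν i
  · obtain ⟨i, hij, hi⟩ := hpred
    obtain ⟨m, hm, hqm, hmi⟩ := ih i (.single hij) hi
    exact ⟨m, hm, hqm, hmi.tail hij⟩
  · push Not at hpred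
    refine ⟨j, hj, ?_, .refl⟩
    exact eq_of_forall_transition_eq_zero hdiag hν hj fun i hij => (hpred i hij).antisymm (hnn i)

end

theorem stmt19_general {ι : Type*} [Fintype ι]
    (Q : Matrix ι ι ℝ) (q : ι → ℝ)
    (hdiag : ∀ i, Q i i = -q i)
    (hoff : ∀ i j, i ≠ j → 0 ≤ Q i j)
    (hDAG : ∀ i j, Relation.ReflTransGen (fun a b => a ≠ b ∧ Q a b ≠ 0) i j →
      Relation.ReflTransGen (fun a b => a ≠ b ∧ Q a b ≠ 0) j i → i = j)
    (lam : ℝ)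
    (i₀ : ι) (hi₀ : q i₀ = lam)
    (hlast : ∀ i, q i = lam → i ≠ i₀ →
      Relation.ReflTransGen (fun a b => a ≠ b ∧ Q a b ≠ 0) i i₀) :
    ∀ ν : ι → ℝ, ν ᵥ* Q = (-lam) • ν → (∀ i, 0 ≤ ν i) → (∑ i, ν i = 1) →
      ∀ j, (0 < ν j ↔ Relation.ReflTransGen (fun a b => a ≠ b ∧ Q a b ≠ 0) i₀ j) := by
  intro ν hν hnn hsum j
  have hsource : ∀ j, 0 < ν j → 0 < ν i₀ ∧ ReflTransGen (Transition Q) i₀ j := fun j hj => by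
    obtain ⟨m, hm, hqm, hmj⟩ := exists_eq_and_reflTransGen_of_pos hDAG hdiag hν hnn hj
    obtain rfl := eq_of_pos_of_eq_of_reflTransGen hdiag hoff hν hnn hi₀ hlast hm hqm
    exact ⟨hm, hmj⟩
  obtain ⟨k, hk⟩ : ∃ k, 0 < ν k := by
    by_contra! h
    simp [fun i => (h i).antisymm (hnn i)] at hsum
  exact ⟨fun hj => (hsource j hj).2, pos_of_reflTransGen hdiag hoff hν hnn (hsource k hk).1⟩

/-- Let Q be the sub-generator of a strictly evolutionary finite chain
(singleton transient classes, DAG transition structure) with exit rates q i, and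
suppose -λ = -min q has left eigenspace of dimension one (geometric multiplicity one),
with associated last minimal class {i₀}: q i₀ = λ and i₀ is accessible from every
other state of minimal rate. Then every left eigenvector ν of Q for -λ that is a
probability vector satisfies ν j > 0 iff j is accessible from i₀. -/
theorem stmt19 {ι : Type*} [Fintype ι] [DecidableEq ι]
    (Q : Matrix ι ι ℝ) (q : ι → ℝ)
    (hqpos : ∀ i, 0 < q i)
    (hdiag : ∀ i, Q i i = -q i)
    (hoff : ∀ i j, i ≠ j → 0 ≤ Q i j)
    (hDAG : ∀ i j, Relation.ReflTransGen (fun a b => a ≠ b ∧ Q a b ≠ 0) i j →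
      Relation.ReflTransGen (fun a b => a ≠ b ∧ Q a b ≠ 0) j i → i = j)
    (lam : ℝ) (hlam_min : ∀ i, lam ≤ q i)
    (i₀ : ι) (hi₀ : q i₀ = lam)
    (hlast : ∀ i, q i = lam → i ≠ i₀ →
      Relation.ReflTransGen (fun a b => a ≠ b ∧ Q a b ≠ 0) i i₀)
    -- geometric multiplicity one for the left eigenvalue -λ
    (hgeo : ∀ ν ν' : ι → ℝ, ν ᵥ* Q = (-lam) • ν → ν' ᵥ* Q = (-lam) • ν' →
      ν ≠ 0 → ∃ c : ℝ, ν' = c • ν) :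
    ∀ ν : ι → ℝ, ν ᵥ* Q = (-lam) • ν → (∀ i, 0 ≤ ν i) → (∑ i, ν i = 1) →
      ∀ j, (0 < ν j ↔ Relation.ReflTransGen (fun a b => a ≠ b ∧ Q a b ≠ 0) i₀ j) :=
  stmt19_general Q q hdiag hoff hDAG lam i₀ hi₀ hlast
end
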